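/- arXiv:2310.06820 — 6 statements merged into one kernel-verified Lean document; each statement's English description precedes it below -/
import Mathlib

section
/- Let k ≥ 1, n ≥ 1, let T : (Fin k → Fin n) → ℤ be a rank-k integer tensor, and let Λ be a unimodular n×n integer matrix (an integer matrix with determinant 1 or −1). Define the transformed tensor T' by T'(f) = ∑_{g : Fin k → Fin n} (∏_{a : Fin k} Λ_{g(a), f(a)}) · T(g). Then the greatest common divisor of the set of all values of T' equals the greatest common divisor of the set of all values of T. -/
private lemma gcd_dvd_of_lin (k n : ℕ) (T S : (Fin k → Fin n) → ℤ)
    (c : (Fin k → Fin n) → (Fin k → Fin n) → ℤ)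
    (hS : ∀ f, S f = ∑ g : Fin k → Fin n, c f g * T g) :
    Finset.univ.gcd T ∣ Finset.univ.gcd S := by
  apply Finset.dvd_gcd
  intro f _
  rw [hS]
  exact Finset.dvd_sum fun g _ => Dvd.dvd.mul_left (Finset.gcd_dvd (Finset.mem_univ g)) _

/-- Invariance of the gcd of the entries of a rank-`k` integer tensor (e.g. the
invariants `d₁ = gcd(κ_{ijk})` and `d₄ = gcd(H_{ijkl})`) under a unimodular
integral change of basis. -/
theorem tensor_gcd_invariant_under_unimodular (k n : ℕ) (hk : 1 ≤ k) (hn : 1 ≤ n)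
    (T : (Fin k → Fin n) → ℤ)
    (Λ : Matrix (Fin n) (Fin n) ℤ) (hΛ : Λ.det = 1 ∨ Λ.det = -1)
    (T' : (Fin k → Fin n) → ℤ)
    (hT' : ∀ f, T' f = ∑ g : Fin k → Fin n, (∏ a : Fin k, Λ (g a) (f a)) * T g) :
    Finset.univ.gcd T' = Finset.univ.gcd T := by
  have hdet : IsUnit Λ.det := by
    rcases hΛ with h | h <;> simp [h, Int.isUnit_iff]
  set M := Λ⁻¹ with hM
  have hmul : Λ * M = 1 := Matrix.mul_nonsing_inv Λ hdet
  have key : ∀ h0 : Fin k → Fin n,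
      T h0 = ∑ f : Fin k → Fin n, (∏ a : Fin k, M (f a) (h0 a)) * T' f := by
    intro h0
    simp only [hT', Finset.mul_sum]
    rw [Finset.sum_comm]
    have : ∀ g : Fin k → Fin n,
        (∑ f : Fin k → Fin n,
          (∏ a, M (f a) (h0 a)) * ((∏ a, Λ (g a) (f a)) * T g))
        = (∏ a : Fin k, (Λ * M) (g a) (h0 a)) * T g := by
      intro g
      have h1 : ∀ f : Fin k → Fin n,
          (∏ a, M (f a) (h0 a)) * ((∏ a, Λ (g a) (f a)) * T g)
          = (∏ a, (fun a j => Λ (g a) j * M j (h0 a)) a (f a)) * T g := by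
        intro f
        rw [← mul_assoc]
        congr 1
        rw [mul_comm, ← Finset.prod_mul_distrib]
      simp only [h1]
      rw [← Finset.sum_mul, ← Fintype.prod_sum (fun a j => Λ (g a) j * M j (h0 a))]
      simp [Matrix.mul_apply]
    simp only [this, hmul]
    rw [Finset.sum_eq_single h0]
    · simp [Matrix.one_apply]
    · intro g _ hg
      have : ∃ a, g a ≠ h0 a := by
        by_contra hc
        push_neg at hc
        exact hg (funext hc)
      obtain ⟨a, ha⟩ := this
      rw [Finset.prod_eq_zero (Finset.mem_univ a) (by simp [Matrix.one_apply, ha]), zero_mul]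
    · intro h; exact absurd (Finset.mem_univ h0) h
  have d1 : Finset.univ.gcd T ∣ Finset.univ.gcd T' :=
    gcd_dvd_of_lin k n T T' _ hT'
  have d2 : Finset.univ.gcd T' ∣ Finset.univ.gcd T :=
    gcd_dvd_of_lin k n T' T _ key
  have n1 : (0:ℤ) ≤ Finset.univ.gcd T' := by
    rw [← Finset.normalize_gcd, ← Int.abs_eq_normalize]; exact abs_nonneg _
  have n2 : (0:ℤ) ≤ Finset.univ.gcd T := by
    rw [← Finset.normalize_gcd, ← Int.abs_eq_normalize]; exact abs_nonneg _
  exact Int.dvd_antisymm n1 n2 d2 d1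
end

section
/- Let n ≥ 1 and let κ : Fin n → Fin n → Fin n → ℤ be a totally symmetric rank-3 integer tensor (κ_{ijk} is unchanged under every permutation of the indices i, j, k). Let Λ be a unimodular n×n integer matrix (an integer matrix with determinant 1 or −1), and define the transformed tensor κ' by κ'_{i'j'k'} = ∑_{i,j,k} Λ_{i i'} Λ_{j j'} Λ_{k k'} κ_{ijk}. Define d₂(κ) as the greatest common divisor of the set {κ_{iij} : i, j ∈ Fin n} ∪ {2·κ_{ijk} : i, j, k ∈ Fin n}. Then d₂(κ') = d₂(κ). -/
open Finset

open Matrix Kronecker in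
private lemma kron_helper {n : ℕ} (Λ M : Matrix (Fin n) (Fin n) ℤ) (hΛM : Λ * M = 1)
    (κ κ' : Fin n → Fin n → Fin n → ℤ)
    (hκ' : ∀ i' j' k', κ' i' j' k' =
      ∑ i, ∑ j, ∑ k, Λ i i' * Λ j j' * Λ k k' * κ i j k) :
    ∀ a b c, κ a b c =
      ∑ i', ∑ j', ∑ k', M i' a * M j' b * M k' c * κ' i' j' k' := by
  classical
  set v : (Fin n × Fin n × Fin n) → ℤ := fun q => κ q.1 q.2.1 q.2.2 with hv
  set v' : (Fin n × Fin n × Fin n) → ℤ := fun q => κ' q.1 q.2.1 q.2.2 with hv'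
  set A : Matrix (Fin n × Fin n × Fin n) (Fin n × Fin n × Fin n) ℤ := Λ ⊗ₖ (Λ ⊗ₖ Λ) with hA
  set B : Matrix (Fin n × Fin n × Fin n) (Fin n × Fin n × Fin n) ℤ := M ⊗ₖ (M ⊗ₖ M) with hB
  have hv'eq : v' = v ᵥ* A := by
    funext q
    rw [show (v ᵥ* A) q = ∑ p, v p * A p q from rfl]
    rw [show v' q = κ' q.1 q.2.1 q.2.2 from rfl, hκ', Fintype.sum_prod_type]
    refine Finset.sum_congr rfl fun i _ => ?_
    rw [Fintype.sum_prod_type]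
    refine Finset.sum_congr rfl fun j _ => Finset.sum_congr rfl fun k _ => ?_
    simp only [hA, hv, Matrix.kroneckerMap_apply]
    ring
  have hAB : A * B = 1 := by
    rw [hA, hB, ← Matrix.mul_kronecker_mul, ← Matrix.mul_kronecker_mul, hΛM,
      Matrix.one_kronecker_one, Matrix.one_kronecker_one]
  have hveq : v = v' ᵥ* B := by
    rw [hv'eq, Matrix.vecMul_vecMul, hAB, Matrix.vecMul_one]
  intro a b c
  have h := congrFun hveq (a, b, c)
  rw [show (v' ᵥ* B) (a, b, c) = ∑ p, v' p * B p (a, b, c) from rfl,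
    Fintype.sum_prod_type] at h
  rw [show κ a b c = v (a, b, c) from rfl, h]
  refine Finset.sum_congr rfl fun i' _ => ?_
  rw [Fintype.sum_prod_type]
  refine Finset.sum_congr rfl fun j' _ => Finset.sum_congr rfl fun k' _ => ?_
  simp only [hB, hv', Matrix.kroneckerMap_apply]
  ring

/-- The divisibility invariant `d₂(κ) = gcd({κ_{iij}} ∪ {2κ_{ijk}})`. -/
noncomputable def d2 (n : ℕ) (κ : Fin n → Fin n → Fin n → ℤ) : ℤ :=
  ((Finset.univ.image fun p : Fin n × Fin n => κ p.1 p.1 p.2) ∪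
    (Finset.univ.image fun p : Fin n × Fin n × Fin n => 2 * κ p.1 p.2.1 p.2.2)).gcd id

lemma d2_dvd_diag (n : ℕ) (κ : Fin n → Fin n → Fin n → ℤ) (i j : Fin n) :
    d2 n κ ∣ κ i i j :=
  Finset.gcd_dvd (Finset.mem_union.mpr (Or.inl
    (Finset.mem_image.mpr ⟨(i, j), Finset.mem_univ _, rfl⟩)))

lemma d2_dvd_two (n : ℕ) (κ : Fin n → Fin n → Fin n → ℤ) (i j k : Fin n) :
    d2 n κ ∣ 2 * κ i j k :=
  Finset.gcd_dvd (Finset.mem_union.mpr (Or.inr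
    (Finset.mem_image.mpr ⟨(i, j, k), Finset.mem_univ _, rfl⟩)))

/-- Key lemma: if `d` divides all `κ_{iij}` and all `2κ_{ijk}` for a tensor symmetric
in its first two indices, then `d` divides `d2` of any linear transform of `κ`. -/
lemma key (n : ℕ) (κ κ' : Fin n → Fin n → Fin n → ℤ)
    (hsym : ∀ i j k, κ i j k = κ j i k)
    (Λ : Matrix (Fin n) (Fin n) ℤ)
    (hκ' : ∀ i' j' k', κ' i' j' k' =
      ∑ i, ∑ j, ∑ k, Λ i i' * Λ j j' * Λ k k' * κ i j k)
    (d : ℤ) (h1 : ∀ i j, d ∣ κ i i j) (h2 : ∀ i j k, d ∣ 2 * κ i j k) :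
    d ∣ d2 n κ' := by
  apply Finset.dvd_gcd
  intro x hx
  simp only [Finset.mem_union, Finset.mem_image, Finset.mem_univ, true_and] at hx
  simp only [id]
  rcases hx with ⟨p, rfl⟩ | ⟨p, rfl⟩
  · -- d ∣ κ' p.1 p.1 p.2
    set i' := p.1; set j' := p.2
    rw [hκ']
    set g : Fin n → Fin n → ℤ := fun a b => Λ a i' * Λ b i' * ∑ c, Λ c j' * κ a b c with hg
    have hrw : (∑ i, ∑ j, ∑ k, Λ i i' * Λ j i' * Λ k j' * κ i j k) = ∑ a, ∑ b, g a b := by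
      refine Finset.sum_congr rfl fun a _ => Finset.sum_congr rfl fun b _ => ?_
      rw [hg]; simp only [Finset.mul_sum]
      exact Finset.sum_congr rfl fun c _ => by ring
    rw [hrw]
    -- work in ZMod d.natAbs
    set m := d.natAbs with hm
    have hd : ∀ x : ℤ, ((x : ZMod m) = 0) → d ∣ x := by
      intro x hx
      rw [ZMod.intCast_zmod_eq_zero_iff_dvd, hm, Int.natAbs_dvd] at hx
      exact hx
    have hd' : ∀ x : ℤ, d ∣ x → ((x : ZMod m) = 0) := by
      intro x hx
      rw [ZMod.intCast_zmod_eq_zero_iff_dvd, hm, Int.natAbs_dvd]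
      exact hx
    apply hd
    push_cast
    rw [← Finset.sum_product']
    rw [← Finset.diag_union_offDiag, Finset.sum_union (Finset.disjoint_diag_offDiag _)]
    have hGsymm : ∀ a b : Fin n, ((g a b : ℤ) : ZMod m) = ((g b a : ℤ) : ZMod m) := by
      intro a b
      have : g a b = g b a := by
        rw [hg]
        simp only
        rw [show (∑ c, Λ c j' * κ a b c) = ∑ c, Λ c j' * κ b a c from
          Finset.sum_congr rfl fun c _ => by rw [hsym a b c]]
        ring
      rw [this]
    have hG2 : ∀ a b : Fin n, ((g a b : ℤ) : ZMod m) + ((g a b : ℤ) : ZMod m) = 0 := by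
      intro a b
      have hdvd : d ∣ 2 * g a b := by
        have : 2 * g a b = ∑ c, Λ a i' * Λ b i' * Λ c j' * (2 * κ a b c) := by
          rw [hg]; simp only; rw [Finset.mul_sum, Finset.mul_sum]
          exact Finset.sum_congr rfl fun c _ => by ring
        rw [this]
        exact Finset.dvd_sum fun c _ => (h2 a b c).mul_left _
      have := hd' _ hdvd
      push_cast at this
      rw [two_mul] at this
      exact this
    have hdiag : (∑ q ∈ Finset.univ.diag, ((g q.1 q.2 : ℤ) : ZMod m)) = 0 := by
      apply Finset.sum_eq_zero
      intro q hq
      rw [Finset.mem_diag] at hq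
      obtain ⟨-, h⟩ := hq
      rw [h]
      apply hd'
      rw [hg]
      exact Dvd.dvd.mul_left (Finset.dvd_sum fun c _ => (h1 q.2 c).mul_left _) _
    have hoff : (∑ q ∈ Finset.univ.offDiag, ((g q.1 q.2 : ℤ) : ZMod m)) = 0 := by
      apply Finset.sum_involution (g := fun q _ => (q.2, q.1))
      · intro q hq
        rw [hGsymm q.2 q.1]
        exact hG2 q.1 q.2
      · intro q hq _
        rw [Finset.mem_offDiag] at hq
        intro hcontra
        exact hq.2.2 (congrArg Prod.fst hcontra).symm
      · intro q hq
        rw [Finset.mem_offDiag] at hq ⊢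
        exact ⟨Finset.mem_univ _, Finset.mem_univ _, hq.2.2.symm⟩
      · intro q hq; rfl
    rw [hdiag, hoff, add_zero]
  · -- d ∣ 2 * κ' p.1 p.2.1 p.2.2
    rw [hκ', Finset.mul_sum]
    refine Finset.dvd_sum fun i _ => ?_
    rw [Finset.mul_sum]
    refine Finset.dvd_sum fun j _ => ?_
    rw [Finset.mul_sum]
    refine Finset.dvd_sum fun k _ => ?_
    rw [show 2 * (Λ i p.1 * Λ j p.2.1 * Λ k p.2.2 * κ i j k)
        = Λ i p.1 * Λ j p.2.1 * Λ k p.2.2 * (2 * κ i j k) by ring]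
    exact (h2 i j k).mul_left _

/-- Invariance of `d₂ = gcd(κ_{iij}, 2κ_{ijk})` under a unimodular integral
change of basis, for a totally symmetric rank-3 integer tensor κ. -/
theorem d2_invariant_under_unimodular (n : ℕ) (hn : 1 ≤ n)
    (κ : Fin n → Fin n → Fin n → ℤ)
    (hsym : ∀ i j k, κ i j k = κ j i k ∧ κ i j k = κ i k j)
    (Λ : Matrix (Fin n) (Fin n) ℤ) (hΛ : Λ.det = 1 ∨ Λ.det = -1)
    (κ' : Fin n → Fin n → Fin n → ℤ)
    (hκ' : ∀ i' j' k', κ' i' j' k' =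
      ∑ i, ∑ j, ∑ k, Λ i i' * Λ j j' * Λ k k' * κ i j k) :
    d2 n κ' = d2 n κ := by
  classical
  have hunit : IsUnit Λ.det := by
    rcases hΛ with h | h <;> rw [h]
    · exact isUnit_one
    · exact isUnit_one.neg
  have hΛM : Λ * Λ⁻¹ = 1 := Matrix.mul_nonsing_inv Λ hunit
  have hinv := kron_helper Λ Λ⁻¹ hΛM κ κ' hκ'
  have hsym' : ∀ i j k, κ' i j k = κ' j i k := by
    intro i' j' k'
    rw [hκ', hκ', Finset.sum_comm]
    refine Finset.sum_congr rfl fun j _ => Finset.sum_congr rfl fun i _ =>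
      Finset.sum_congr rfl fun k _ => ?_
    rw [(hsym i j k).1]; ring
  have h1 : d2 n κ ∣ d2 n κ' :=
    key n κ κ' (fun i j k => (hsym i j k).1) Λ hκ' (d2 n κ)
      (d2_dvd_diag n κ) (d2_dvd_two n κ)
  have h2 : d2 n κ' ∣ d2 n κ :=
    key n κ' κ hsym' Λ⁻¹ hinv (d2 n κ')
      (d2_dvd_diag n κ') (d2_dvd_two n κ')
  exact dvd_antisymm_of_normalize_eq Finset.normalize_gcd Finset.normalize_gcd h2 h1
end

section
/- Let n ≥ 1 and let κ : Fin n → Fin n → Fin n → ℤ be a totally symmetric rank-3 integer tensor. Let Λ be a unimodular n×n integer matrix (an integer matrix with determinant 1 or −1), and define the transformed tensor κ' by κ'_{i'j'k'} = ∑_{i,j,k} Λ_{i i'} Λ_{j j'} Λ_{k k'} κ_{ijk}. Define d₃(κ) as the greatest common divisor of the set {κ_{iii} : i} ∪ {3·(κ_{iij} + κ_{ijj}) : i, j} ∪ {3·(κ_{iij} − κ_{ijj}) : i, j} ∪ {6·κ_{ijk} : i, j, k}. Then d₃(κ') = d₃(κ). -/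
open Finset


section
variable {n : ℕ}

/-- Trilinear form associated to a rank-3 tensor. -/
def Bf (κ : Fin n → Fin n → Fin n → ℤ) (u v w : Fin n → ℤ) : ℤ :=
  ∑ i, ∑ j, ∑ k, u i * v j * w k * κ i j k

lemma Bf_swap12 (κ : Fin n → Fin n → Fin n → ℤ)
    (hsym : ∀ i j k, κ i j k = κ j i k ∧ κ i j k = κ i k j)
    (u v w : Fin n → ℤ) : Bf κ u v w = Bf κ v u w := by
  unfold Bf
  rw [Finset.sum_comm]
  refine Finset.sum_congr rfl fun j _ => Finset.sum_congr rfl fun i _ =>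
    Finset.sum_congr rfl fun k _ => ?_
  rw [(hsym i j k).1]; ring

lemma Bf_swap23 (κ : Fin n → Fin n → Fin n → ℤ)
    (hsym : ∀ i j k, κ i j k = κ j i k ∧ κ i j k = κ i k j)
    (u v w : Fin n → ℤ) : Bf κ u v w = Bf κ u w v := by
  unfold Bf
  refine Finset.sum_congr rfl fun i _ => ?_
  rw [Finset.sum_comm]
  refine Finset.sum_congr rfl fun k _ => Finset.sum_congr rfl fun j _ => ?_
  rw [(hsym i j k).2]; ring

lemma Bf_add1 (κ : Fin n → Fin n → Fin n → ℤ) (u u' v w : Fin n → ℤ) :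
    Bf κ (u + u') v w = Bf κ u v w + Bf κ u' v w := by
  simp [Bf, add_mul, Finset.sum_add_distrib]

lemma Bf_add2 (κ : Fin n → Fin n → Fin n → ℤ) (u v v' w : Fin n → ℤ) :
    Bf κ u (v + v') w = Bf κ u v w + Bf κ u v' w := by
  simp [Bf, add_mul, mul_add, Finset.sum_add_distrib]

lemma Bf_add3 (κ : Fin n → Fin n → Fin n → ℤ) (u v w w' : Fin n → ℤ) :
    Bf κ u v (w + w') = Bf κ u v w + Bf κ u v w' := by
  simp [Bf, add_mul, mul_add, Finset.sum_add_distrib]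

lemma Bf_neg3 (κ : Fin n → Fin n → Fin n → ℤ) (u v w : Fin n → ℤ) :
    Bf κ u v (-w) = -Bf κ u v w := by
  simp [Bf, mul_neg, neg_mul, Finset.sum_neg_distrib]


variable (κ : Fin n → Fin n → Fin n → ℤ)
  (hsym : ∀ i j k, κ i j k = κ j i k ∧ κ i j k = κ i k j)
include hsym

/-- put a `Bf` value into canonical slot order -/
lemma Bf_sort (u v w : Fin n → ℤ) :
    Bf κ w u v = Bf κ u v w ∧ Bf κ v w u = Bf κ u v w := by
  constructor
  · rw [Bf_swap12 κ hsym, Bf_swap23 κ hsym]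
  · rw [Bf_swap23 κ hsym, Bf_swap12 κ hsym]

lemma F_add (u w : Fin n → ℤ) :
    Bf κ (u + w) (u + w) (u + w)
      = Bf κ u u u + 3 * Bf κ u u w + 3 * Bf κ u w w + Bf κ w w w := by
  rw [Bf_add1, Bf_add2, Bf_add2, Bf_add3, Bf_add3, Bf_add3, Bf_add3]
  have h1 : Bf κ u w u = Bf κ u u w := by rw [Bf_swap23 κ hsym]
  have h2 : Bf κ w u u = Bf κ u u w := (Bf_sort κ hsym u u w).1
  have h3 : Bf κ w u w = Bf κ u w w := by rw [Bf_swap12 κ hsym]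
  have h4 : Bf κ w w u = Bf κ u w w := (Bf_sort κ hsym u w w).2
  rw [h1, h2, h3, h4]; ring

lemma F_sub (u w : Fin n → ℤ) :
    Bf κ (u - w) (u - w) (u - w)
      = Bf κ u u u - 3 * Bf κ u u w + 3 * Bf κ u w w - Bf κ w w w := by
  have := F_add κ hsym u (-w)
  rw [show u + -w = u - w by ring] at this
  rw [this]
  have e1 : Bf κ u u (-w) = -Bf κ u u w := Bf_neg3 ..
  have e2 : Bf κ u (-w) (-w) = Bf κ u w w := by
    rw [Bf_swap23 κ hsym, Bf_neg3, Bf_swap23 κ hsym u (-w) w, Bf_neg3, Bf_swap23 κ hsym]; ring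
  have e3 : Bf κ (-w) (-w) (-w) = -Bf κ w w w := by
    rw [Bf_swap23 κ hsym, Bf_neg3, Bf_swap12 κ hsym, Bf_swap23 κ hsym, Bf_neg3,
      Bf_swap12 κ hsym, Bf_swap23 κ hsym, Bf_neg3]; ring
  rw [e1, e2, e3]; ring

lemma F_triple (u w x : Fin n → ℤ) :
    Bf κ (u + w + x) (u + w + x) (u + w + x)
      - Bf κ (u + w) (u + w) (u + w) - Bf κ (u + x) (u + x) (u + x)
      - Bf κ (w + x) (w + x) (w + x)
      + Bf κ u u u + Bf κ w w w + Bf κ x x x = 6 * Bf κ u w x := by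
  have h1 := F_add κ hsym (u + w) x
  have h2 := F_add κ hsym u w
  have h3 := F_add κ hsym u x
  have h4 := F_add κ hsym w x
  rw [h1, h2, h3, h4]
  simp only [Bf_add1, Bf_add2]
  have e1 : Bf κ w u x = Bf κ u w x := by rw [Bf_swap12 κ hsym]
  rw [e1]; ring

omit hsym in
lemma dvd_xy (d a b x y : ℤ) (hab : d ∣ a + b) (hab' : d ∣ a - b) :
    d ∣ x * y * (x * a + y * b) := by
  have hev : Even (x * y * (x - y)) := by
    rcases Int.even_or_odd x with hx | hx
    · exact (hx.mul_right y).mul_right _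
    rcases Int.even_or_odd y with hy | hy
    · exact (hy.mul_left x).mul_right _
    · exact (hx.sub_odd hy).mul_left _
  obtain ⟨t, ht⟩ := hev
  obtain ⟨c1, hc1⟩ := hab
  obtain ⟨c2, hc2⟩ := hab'
  exact ⟨x * y * y * c1 + t * c1 + t * c2, by linear_combination (x*y*y + t) * hc1 + t * hc2 + a * ht⟩

omit hsym in
lemma dvd_double_sum (d : ℤ) (f : Fin n → Fin n → ℤ) (s : Finset (Fin n))
    (hd : ∀ i, d ∣ f i i) (ho : ∀ i j, i ≠ j → d ∣ f i j + f j i) :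
    d ∣ ∑ i ∈ s, ∑ j ∈ s, f i j := by
  classical
  induction s using Finset.induction_on with
  | empty => simp
  | @insert a s' ha ih =>
    rw [Finset.sum_insert ha, Finset.sum_insert ha]
    have h1 : ∑ i ∈ s', ∑ j ∈ insert a s', f i j
        = ∑ i ∈ s', f i a + ∑ i ∈ s', ∑ j ∈ s', f i j := by
      rw [← Finset.sum_add_distrib]
      exact Finset.sum_congr rfl fun i hi => Finset.sum_insert ha
    rw [h1]
    have hterm : d ∣ ∑ j ∈ s', (f a j + f j a) :=
      Finset.dvd_sum fun j hj => ho a j (fun h => ha (h ▸ hj))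
    have hall : d ∣ f a a + ∑ j ∈ s', (f a j + f j a) + ∑ i ∈ s', ∑ j ∈ s', f i j :=
      dvd_add (dvd_add (hd a) hterm) ih
    convert hall using 1
    rw [Finset.sum_add_distrib]; ring

lemma dvd_F (d : ℤ)
    (h1 : ∀ i, d ∣ κ i i i)
    (h2 : ∀ i j, d ∣ 3 * (κ i i j + κ i j j))
    (h3 : ∀ i j, d ∣ 3 * (κ i i j - κ i j j))
    (h4 : ∀ i j k, d ∣ 6 * κ i j k)
    (v : Fin n → ℤ) : d ∣ Bf κ v v v := by
  classical
  suffices H : ∀ s : Finset (Fin n), ∀ v : Fin n → ℤ,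
      (∀ i ∉ s, v i = 0) → d ∣ Bf κ v v v by
    exact H Finset.univ v (by simp)
  intro s
  induction s using Finset.induction_on with
  | empty =>
    intro v hv
    have hv' : ∀ i, v i = 0 := fun i => hv i (by simp)
    simp [Bf, hv']
  | @insert a s' ha ih =>
    intro v hv
    set w : Fin n → ℤ := Function.update v a 0 with hw
    set x : Fin n → ℤ := fun i => if i = a then v a else 0 with hx
    have hvwx : v = w + x := by
      funext i
      by_cases hia : i = a
      · subst hia; simp [hw, hx]
      · simp [hw, hx, hia, Function.update_of_ne hia]
    have hws : ∀ i ∉ s', w i = 0 := by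
      intro i hi
      by_cases hia : i = a
      · subst hia; simp [hw]
      · have : i ∉ insert a s' := by simp [hia, hi]
        simp [hw, Function.update_of_ne hia, hv i this]
    have hFw : d ∣ Bf κ w w w := ih w hws
    -- collapse the x sums
    have hxxx : Bf κ x x x = v a * v a * v a * κ a a a := by
      simp [Bf, hx, ite_mul, mul_ite, zero_mul, mul_zero]
    have hwxx : Bf κ w x x = ∑ i, w i * v a * v a * κ i a a := by
      simp [Bf, hx, ite_mul, mul_ite, zero_mul, mul_zero]
    have hwwx : Bf κ w w x = ∑ i, ∑ j, w i * w j * v a * κ i j a := by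
      simp [Bf, hx, ite_mul, mul_ite, zero_mul, mul_zero]
    have hFx : d ∣ Bf κ x x x := by
      rw [hxxx]
      exact Dvd.dvd.mul_left (h1 a) _
    -- the mixed part
    set f : Fin n → Fin n → ℤ := fun i j =>
      3 * v a * w i * w j * κ i j a +
        (if i = j then 3 * v a * v a * w i * κ i a a else 0) with hf
    have hmix : 3 * Bf κ w w x + 3 * Bf κ w x x = ∑ i, ∑ j, f i j := by
      rw [hwwx, hwxx, Finset.mul_sum, Finset.mul_sum]
      rw [show (∑ i, ∑ j, f i j)
          = ∑ i, ((∑ j, 3 * v a * w i * w j * κ i j a) + 3 * v a * v a * w i * κ i a a) from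
        Finset.sum_congr rfl fun i _ => by
          rw [hf, Finset.sum_add_distrib, Finset.sum_ite_eq Finset.univ i
            (fun _ => 3 * v a * v a * w i * κ i a a)]
          simp]
      rw [Finset.sum_add_distrib]
      congr 1
      · exact Finset.sum_congr rfl fun i _ => by
          rw [Finset.mul_sum]; exact Finset.sum_congr rfl fun j _ => by ring
      · exact Finset.sum_congr rfl fun i _ => by ring
    have hdmix : d ∣ 3 * Bf κ w w x + 3 * Bf κ w x x := by
      rw [hmix]
      refine dvd_double_sum d f Finset.univ ?_ ?_
      · intro i
        have key := dvd_xy d (3 * κ i i a) (3 * κ i a a) (w i) (v a)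
          (by have := h2 i a; convert this using 1; ring)
          (by have := h3 i a; convert this using 1; ring)
        have : f i i = w i * v a * (w i * (3 * κ i i a) + v a * (3 * κ i a a)) := by
          rw [hf]; simp; ring
        rw [this]; exact key
      · intro i j hij
        have : f i j + f j i = v a * w i * w j * (6 * κ i j a) := by
          rw [hf]; simp [hij, hij.symm, Ne.symm]
          rw [(hsym j i a).1]; ring
        rw [this]
        exact Dvd.dvd.mul_left (h4 i j a) _
    rw [hvwx, F_add κ hsym]
    have : Bf κ w w w + 3 * Bf κ w w x + 3 * Bf κ w x x + Bf κ x x x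
        = Bf κ w w w + (3 * Bf κ w w x + 3 * Bf κ w x x) + Bf κ x x x := by ring
    rw [this]
    exact dvd_add (dvd_add hFw hdmix) hFx

end


section AuxInv
variable {n : ℕ}

/-- Inverting a single linear substitution via `Λ * M = 1`. -/
lemma sum_inv (Λ M : Matrix (Fin n) (Fin n) ℤ) (hΛM : Λ * M = 1)
    (g : Fin n → ℤ) (a : Fin n) :
    ∑ i', M i' a * (∑ i, Λ i i' * g i) = g a := by
  simp only [Finset.mul_sum]
  rw [Finset.sum_comm]
  have key : ∀ i, ∑ i', M i' a * (Λ i i' * g i) = (Λ * M) i a * g i := by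
    intro i
    rw [Matrix.mul_apply, Finset.sum_mul]
    exact Finset.sum_congr rfl fun i' _ => by ring
  rw [Finset.sum_congr rfl fun i _ => key i, hΛM]
  simp [Matrix.one_apply]

lemma reorder3 (T : Fin n → Fin n → Fin n → ℤ) :
    (∑ i, ∑ j, ∑ k, T i j k) = ∑ k, ∑ i, ∑ j, T i j k :=
  calc (∑ i, ∑ j, ∑ k, T i j k) = ∑ i, ∑ k, ∑ j, T i j k :=
        Finset.sum_congr rfl fun i _ => Finset.sum_comm
    _ = ∑ k, ∑ i, ∑ j, T i j k := Finset.sum_comm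

lemma inv_transform (κ κ' : Fin n → Fin n → Fin n → ℤ)
    (Λ M : Matrix (Fin n) (Fin n) ℤ) (hΛM : Λ * M = 1)
    (hκ' : ∀ i' j' k', κ' i' j' k' =
      ∑ i, ∑ j, ∑ k, Λ i i' * Λ j j' * Λ k k' * κ i j k) :
    ∀ a b c, κ a b c =
      ∑ i', ∑ j', ∑ k', M i' a * M j' b * M k' c * κ' i' j' k' := by
  intro a b c
  have inner1 : ∀ i' j', ∑ k', M k' c * κ' i' j' k'
      = ∑ i, ∑ j, Λ i i' * Λ j j' * κ i j c := by
    intro i' j'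
    have repr : ∀ k', κ' i' j' k'
        = ∑ k, Λ k k' * (∑ i, ∑ j, Λ i i' * Λ j j' * κ i j k) := by
      intro k'
      rw [hκ', reorder3]
      refine Finset.sum_congr rfl fun k _ => ?_
      rw [Finset.mul_sum]
      refine Finset.sum_congr rfl fun i _ => ?_
      rw [Finset.mul_sum]
      exact Finset.sum_congr rfl fun j _ => by ring
    rw [Finset.sum_congr rfl fun k' _ => by rw [repr k']]
    exact sum_inv Λ M hΛM (fun k => ∑ i, ∑ j, Λ i i' * Λ j j' * κ i j k) c
  have inner2 : ∀ i', ∑ j', M j' b * (∑ i, ∑ j, Λ i i' * Λ j j' * κ i j c)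
      = ∑ i, Λ i i' * κ i b c := by
    intro i'
    have repr : ∀ j', (∑ i, ∑ j, Λ i i' * Λ j j' * κ i j c)
        = ∑ j, Λ j j' * (∑ i, Λ i i' * κ i j c) := by
      intro j'
      rw [Finset.sum_comm]
      refine Finset.sum_congr rfl fun j _ => ?_
      rw [Finset.mul_sum]
      exact Finset.sum_congr rfl fun i _ => by ring
    rw [Finset.sum_congr rfl fun j' _ => by rw [repr j']]
    exact sum_inv Λ M hΛM (fun j => ∑ i, Λ i i' * κ i j c) b
  have nest : ∑ i', ∑ j', ∑ k', M i' a * M j' b * M k' c * κ' i' j' k'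
      = ∑ i', M i' a * (∑ j', M j' b * (∑ k', M k' c * κ' i' j' k')) := by
    refine Finset.sum_congr rfl fun i' _ => ?_
    rw [Finset.mul_sum]
    refine Finset.sum_congr rfl fun j' _ => ?_
    rw [Finset.mul_sum, Finset.mul_sum]
    exact Finset.sum_congr rfl fun k' _ => by ring
  rw [nest]
  rw [Finset.sum_congr rfl fun i' _ => by
    rw [Finset.sum_congr rfl fun j' _ => by rw [inner1 i' j'], inner2 i']]
  exact (sum_inv Λ M hΛM (fun i => κ i b c) a).symm

end AuxInv

/-- The divisibility invariant
`d₃(κ) = gcd({κ_{iii}} ∪ {3(κ_{iij} + κ_{ijj})} ∪ {3(κ_{iij} − κ_{ijj})} ∪ {6κ_{ijk}})`. -/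
noncomputable def d3 (n : ℕ) (κ : Fin n → Fin n → Fin n → ℤ) : ℤ :=
  ((Finset.univ.image fun i : Fin n => κ i i i) ∪
    (Finset.univ.image fun p : Fin n × Fin n => 3 * (κ p.1 p.1 p.2 + κ p.1 p.2 p.2)) ∪
    (Finset.univ.image fun p : Fin n × Fin n => 3 * (κ p.1 p.1 p.2 - κ p.1 p.2 p.2)) ∪
    (Finset.univ.image fun p : Fin n × Fin n × Fin n => 6 * κ p.1 p.2.1 p.2.2)).gcd id

section Glue
variable {n : ℕ}

lemma d3_dvd₁ (κ : Fin n → Fin n → Fin n → ℤ) (i : Fin n) : d3 n κ ∣ κ i i i := by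
  refine Finset.gcd_dvd ?_
  simp only [d3, Finset.mem_union, Finset.mem_image]
  exact Or.inl (Or.inl (Or.inl ⟨i, Finset.mem_univ i, rfl⟩))

lemma d3_dvd₂ (κ : Fin n → Fin n → Fin n → ℤ) (i j : Fin n) :
    d3 n κ ∣ 3 * (κ i i j + κ i j j) := by
  refine Finset.gcd_dvd ?_
  simp only [d3, Finset.mem_union, Finset.mem_image]
  exact Or.inl (Or.inl (Or.inr ⟨(i, j), Finset.mem_univ _, rfl⟩))

lemma d3_dvd₃ (κ : Fin n → Fin n → Fin n → ℤ) (i j : Fin n) :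
    d3 n κ ∣ 3 * (κ i i j - κ i j j) := by
  refine Finset.gcd_dvd ?_
  simp only [d3, Finset.mem_union, Finset.mem_image]
  exact Or.inl (Or.inr ⟨(i, j), Finset.mem_univ _, rfl⟩)

lemma d3_dvd₄ (κ : Fin n → Fin n → Fin n → ℤ) (i j k : Fin n) :
    d3 n κ ∣ 6 * κ i j k := by
  refine Finset.gcd_dvd ?_
  simp only [d3, Finset.mem_union, Finset.mem_image]
  exact Or.inr ⟨(i, j, k), Finset.mem_univ _, rfl⟩

lemma dvd_d3 (κ : Fin n → Fin n → Fin n → ℤ) (d : ℤ)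
    (h1 : ∀ i, d ∣ κ i i i)
    (h2 : ∀ i j, d ∣ 3 * (κ i i j + κ i j j))
    (h3 : ∀ i j, d ∣ 3 * (κ i i j - κ i j j))
    (h4 : ∀ i j k, d ∣ 6 * κ i j k) : d ∣ d3 n κ := by
  refine Finset.dvd_gcd fun b hb => ?_
  simp only [Finset.mem_union, Finset.mem_image] at hb
  rcases hb with (((⟨i, _, rfl⟩ | ⟨p, _, rfl⟩) | ⟨p, _, rfl⟩) | ⟨p, _, rfl⟩)
  · exact h1 i
  · exact h2 p.1 p.2
  · exact h3 p.1 p.2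
  · exact h4 p.1 p.2.1 p.2.2

/-- One-sided invariance: the old invariant divides the new one (no det hypothesis needed). -/
lemma d3_dvd_d3 (κ κ' : Fin n → Fin n → Fin n → ℤ)
    (hsym : ∀ i j k, κ i j k = κ j i k ∧ κ i j k = κ i k j)
    (Λ : Matrix (Fin n) (Fin n) ℤ)
    (hκ' : ∀ i' j' k', κ' i' j' k' =
      ∑ i, ∑ j, ∑ k, Λ i i' * Λ j j' * Λ k k' * κ i j k) :
    d3 n κ ∣ d3 n κ' := by
  set d := d3 n κ with hd
  have hF : ∀ v, d ∣ Bf κ v v v :=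
    dvd_F κ hsym d (d3_dvd₁ κ) (d3_dvd₂ κ) (d3_dvd₃ κ) (d3_dvd₄ κ)
  have hB : ∀ i' j' k', κ' i' j' k'
      = Bf κ (fun i => Λ i i') (fun j => Λ j j') (fun k => Λ k k') := by
    intro i' j' k'; rw [hκ']; rfl
  refine dvd_d3 κ' d ?_ ?_ ?_ ?_
  · intro i
    rw [hB]
    exact hF _
  · intro i j
    set u : Fin n → ℤ := fun p => Λ p i
    set w : Fin n → ℤ := fun p => Λ p j
    have key : 3 * (κ' i i j + κ' i j j)
        = Bf κ (u + w) (u + w) (u + w) - Bf κ u u u - Bf κ w w w := by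
      rw [hB i i j, hB i j j, F_add κ hsym]; ring
    rw [key]
    exact dvd_sub (dvd_sub (hF _) (hF _)) (hF _)
  · intro i j
    set u : Fin n → ℤ := fun p => Λ p i
    set w : Fin n → ℤ := fun p => Λ p j
    have key : 3 * (κ' i i j - κ' i j j)
        = Bf κ u u u - Bf κ w w w - Bf κ (u - w) (u - w) (u - w) := by
      rw [hB i i j, hB i j j, F_sub κ hsym]; ring
    rw [key]
    exact dvd_sub (dvd_sub (hF _) (hF _)) (hF _)
  · intro i j k
    set u : Fin n → ℤ := fun p => Λ p i
    set w : Fin n → ℤ := fun p => Λ p j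
    set x : Fin n → ℤ := fun p => Λ p k
    have key : 6 * κ' i j k
        = Bf κ (u + w + x) (u + w + x) (u + w + x)
          - Bf κ (u + w) (u + w) (u + w) - Bf κ (u + x) (u + x) (u + x)
          - Bf κ (w + x) (w + x) (w + x)
          + Bf κ u u u + Bf κ w w w + Bf κ x x x := by
      rw [hB i j k, ← F_triple κ hsym u w x]
    rw [key]
    exact dvd_add (dvd_add (dvd_add (dvd_sub (dvd_sub (dvd_sub (hF _) (hF _)) (hF _)) (hF _))
      (hF _)) (hF _)) (hF _)

end Glue

/-- Invariance of `d₃ = gcd(κ_{iii}, 3(κ_{iij} ± κ_{ijj}), 6κ_{ijk})` under a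
unimodular integral change of basis, for a totally symmetric rank-3 integer tensor κ. -/
theorem d3_invariant_under_unimodular (n : ℕ) (hn : 1 ≤ n)
    (κ : Fin n → Fin n → Fin n → ℤ)
    (hsym : ∀ i j k, κ i j k = κ j i k ∧ κ i j k = κ i k j)
    (Λ : Matrix (Fin n) (Fin n) ℤ) (hΛ : Λ.det = 1 ∨ Λ.det = -1)
    (κ' : Fin n → Fin n → Fin n → ℤ)
    (hκ' : ∀ i' j' k', κ' i' j' k' =
      ∑ i, ∑ j, ∑ k, Λ i i' * Λ j j' * Λ k k' * κ i j k) :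
    d3 n κ' = d3 n κ := by
  -- symmetry of κ'
  have hB : ∀ i' j' k', κ' i' j' k'
      = Bf κ (fun i => Λ i i') (fun j => Λ j j') (fun k => Λ k k') := by
    intro i' j' k'; rw [hκ']; rfl
  have hsym' : ∀ i j k, κ' i j k = κ' j i k ∧ κ' i j k = κ' i k j := by
    intro i j k
    constructor
    · rw [hB i j k, hB j i k, Bf_swap12 κ hsym]
    · rw [hB i j k, hB i k j, Bf_swap23 κ hsym]
  -- inverse matrix
  have hdet : IsUnit Λ.det := by
    rcases hΛ with h | h
    · rw [h]; exact isUnit_one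
    · rw [h]; exact Int.isUnit_iff.mpr (Or.inr rfl)
  have hΛM : Λ * Λ⁻¹ = 1 := Matrix.mul_nonsing_inv Λ hdet
  have hκinv := inv_transform κ κ' Λ Λ⁻¹ hΛM hκ'
  have h1 : d3 n κ ∣ d3 n κ' := d3_dvd_d3 κ κ' hsym Λ hκ'
  have h2 : d3 n κ' ∣ d3 n κ := d3_dvd_d3 κ' κ hsym' Λ⁻¹ hκinv
  have nonneg : ∀ (τ : Fin n → Fin n → Fin n → ℤ), 0 ≤ d3 n τ := by
    intro τ
    have h := Finset.normalize_gcd (f := (id : ℤ → ℤ))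
      (s := ((Finset.univ.image fun i : Fin n => τ i i i) ∪
        (Finset.univ.image fun p : Fin n × Fin n => 3 * (τ p.1 p.1 p.2 + τ p.1 p.2 p.2)) ∪
        (Finset.univ.image fun p : Fin n × Fin n => 3 * (τ p.1 p.1 p.2 - τ p.1 p.2 p.2)) ∪
        (Finset.univ.image fun p : Fin n × Fin n × Fin n => 6 * τ p.1 p.2.1 p.2.2)))
    rw [← Int.abs_eq_normalize] at h
    rw [d3, ← h]
    exact abs_nonneg _
  exact Int.dvd_antisymm (nonneg κ') (nonneg κ) h2 h1
end

section
/- Let n ≥ 1 and let H : Fin n → Fin n → Fin n → Fin n → ℤ be a totally symmetric rank-4 integer tensor (H_{ijkl} is unchanged under every permutation of the indices). Let Λ be a unimodular n×n integer matrix (an integer matrix with determinant 1 or −1), and define the transformed tensor H' by H'_{i'j'k'l'} = ∑_{i,j,k,l} Λ_{i i'} Λ_{j j'} Λ_{k k'} Λ_{l l'} H_{ijkl}. Define d₅(H) as the greatest common divisor of the set {H_{iijk} : i, j, k} ∪ {2·H_{ijkl} : i, j, k, l}. Then d₅(H') = d₅(H). -/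
open Finset

section AuxForD5

variable (n : ℕ)

private theorem d5aux_sum_pair_decomp (f : Fin n → Fin n → ℤ) :
    ∑ i, ∑ j, f i j = (∑ i, f i i) +
      ∑ p ∈ (univ ×ˢ univ : Finset (Fin n × Fin n)).filter (fun p => p.1 < p.2),
        (f p.1 p.2 + f p.2 p.1) := by
  classical
  rw [← Finset.sum_product']
  rw [← Finset.sum_filter_add_sum_filter_not (univ ×ˢ univ) (fun p => p.1 = p.2)
    (fun p => f p.1 p.2)]
  congr 1
  · apply Finset.sum_bij' (fun (p : Fin n × Fin n) (_ : p ∈ (univ ×ˢ univ).filter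
        (fun p => p.1 = p.2)) => p.1) (fun i _ => (i, i))
    · intro p hp; simp
    · intro i _; simp
    · intro p hp
      simp only [Finset.mem_filter] at hp
      exact Prod.ext rfl hp.2
    · intro i _; rfl
    · intro p hp
      simp only [Finset.mem_filter] at hp
      rw [hp.2]
  · rw [← Finset.sum_filter_add_sum_filter_not ((univ ×ˢ univ).filter
      (fun p : Fin n × Fin n => ¬ p.1 = p.2)) (fun p => p.1 < p.2) (fun p => f p.1 p.2)]
    rw [Finset.filter_filter, Finset.filter_filter]
    have h1 : ((univ ×ˢ univ : Finset (Fin n × Fin n)).filter fun p => ¬ p.1 = p.2 ∧ p.1 < p.2)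
        = (univ ×ˢ univ).filter (fun p => p.1 < p.2) := by
      apply Finset.filter_congr
      intro p _
      constructor
      · rintro ⟨_, h⟩; exact h
      · intro h; exact ⟨ne_of_lt h, h⟩
    have h2 : ∑ p ∈ ((univ ×ˢ univ : Finset (Fin n × Fin n)).filter
        fun p => ¬ p.1 = p.2 ∧ ¬ p.1 < p.2), f p.1 p.2
        = ∑ p ∈ (univ ×ˢ univ : Finset (Fin n × Fin n)).filter (fun p => p.1 < p.2),
          f p.2 p.1 := by
      apply Finset.sum_bij' (fun (p : Fin n × Fin n) _ => p.swap) (fun p _ => p.swap)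
      · intro p hp
        simp only [Finset.mem_filter, Finset.mem_univ, Finset.mem_product, true_and,
          Prod.fst_swap, Prod.snd_swap, and_true] at hp ⊢
        rcases lt_or_ge p.2 p.1 with h | h
        · exact h
        · exact absurd (lt_of_le_of_ne h hp.1) hp.2
      · intro p hp
        simp only [Finset.mem_filter, Finset.mem_univ, Finset.mem_product, true_and,
          Prod.fst_swap, Prod.snd_swap, and_true] at hp ⊢
        exact ⟨ne_of_gt hp, not_lt_of_gt hp⟩
      · intro p _; exact Prod.swap_swap p
      · intro p _; exact Prod.swap_swap p
      · intro p _; rfl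
    rw [h1, h2, ← Finset.sum_add_distrib]

private theorem d5aux_flat4 (f : Fin n → Fin n → Fin n → Fin n → ℤ) :
    (∑ i, ∑ j, ∑ k, ∑ l, f i j k l)
      = ∑ p : Fin n × Fin n × Fin n × Fin n, f p.1 p.2.1 p.2.2.1 p.2.2.2 := by
  simp only [Fintype.sum_prod_type]

private theorem d5aux_inv_transform (A B : Matrix (Fin n) (Fin n) ℤ) (hAB : A * B = 1)
    (H H' : Fin n → Fin n → Fin n → Fin n → ℤ)
    (hH' : ∀ i' j' k' l', H' i' j' k' l' =
      ∑ i, ∑ j, ∑ k, ∑ l, A i i' * A j j' * A k k' * A l l' * H i j k l)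
    (a b c d : Fin n) :
    H a b c d = ∑ i', ∑ j', ∑ k', ∑ l',
      B i' a * B j' b * B k' c * B l' d * H' i' j' k' l' := by
  have key : ∀ x y : Fin n, (∑ i', A x i' * B i' y) = if x = y then 1 else 0 := by
    intro x y
    have := congrFun (congrFun hAB x) y
    simpa [Matrix.mul_apply, Matrix.one_apply] using this
  calc H a b c d
      = ∑ p : Fin n × Fin n × Fin n × Fin n,
          (∑ i', A p.1 i' * B i' a) * ((∑ j', A p.2.1 j' * B j' b) *
          ((∑ k', A p.2.2.1 k' * B k' c) * ((∑ l', A p.2.2.2 l' * B l' d) *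
            H p.1 p.2.1 p.2.2.1 p.2.2.2))) := by
        simp only [key]
        simp [Fintype.sum_prod_type, ite_mul, mul_ite, mul_one, mul_zero,
          Finset.sum_ite_eq', Finset.mem_univ]
    _ = ∑ p : Fin n × Fin n × Fin n × Fin n,
          ∑ q : Fin n × Fin n × Fin n × Fin n,
          B q.1 a * B q.2.1 b * B q.2.2.1 c * B q.2.2.2 d *
            (A p.1 q.1 * A p.2.1 q.2.1 * A p.2.2.1 q.2.2.1 * A p.2.2.2 q.2.2.2 *
              H p.1 p.2.1 p.2.2.1 p.2.2.2) := by
        apply Finset.sum_congr rfl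
        intro p _
        rw [← d5aux_flat4 n (fun i' j' k' l' => B i' a * B j' b * B k' c * B l' d *
          (A p.1 i' * A p.2.1 j' * A p.2.2.1 k' * A p.2.2.2 l' *
            H p.1 p.2.1 p.2.2.1 p.2.2.2))]
        have reassoc : (∑ i', ∑ j', ∑ k', ∑ l', B i' a * B j' b * B k' c * B l' d *
              (A p.1 i' * A p.2.1 j' * A p.2.2.1 k' * A p.2.2.2 l' *
                H p.1 p.2.1 p.2.2.1 p.2.2.2))
            = ∑ i', ∑ j', ∑ k', ∑ l', (A p.1 i' * B i' a) * ((A p.2.1 j' * B j' b) *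
              ((A p.2.2.1 k' * B k' c) * ((A p.2.2.2 l' * B l' d) *
                H p.1 p.2.1 p.2.2.1 p.2.2.2))) := by
          apply Finset.sum_congr rfl; intro i' _
          apply Finset.sum_congr rfl; intro j' _
          apply Finset.sum_congr rfl; intro k' _
          apply Finset.sum_congr rfl; intro l' _
          ring
        rw [reassoc]
        simp only [← Finset.mul_sum, ← Finset.sum_mul]
    _ = ∑ q : Fin n × Fin n × Fin n × Fin n,
          ∑ p : Fin n × Fin n × Fin n × Fin n,
          B q.1 a * B q.2.1 b * B q.2.2.1 c * B q.2.2.2 d *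
            (A p.1 q.1 * A p.2.1 q.2.1 * A p.2.2.1 q.2.2.1 * A p.2.2.2 q.2.2.2 *
              H p.1 p.2.1 p.2.2.1 p.2.2.2) := Finset.sum_comm
    _ = ∑ i', ∑ j', ∑ k', ∑ l',
          B i' a * B j' b * B k' c * B l' d * H' i' j' k' l' := by
        rw [d5aux_flat4 n (fun i' j' k' l' =>
          B i' a * B j' b * B k' c * B l' d * H' i' j' k' l')]
        apply Finset.sum_congr rfl
        intro q _
        rw [hH' q.1 q.2.1 q.2.2.1 q.2.2.2,
          d5aux_flat4 n (fun i j k l => A i q.1 * A j q.2.1 * A k q.2.2.1 * A l q.2.2.2 *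
            H i j k l), Finset.mul_sum]

private theorem d5aux_dvd_transformed (Λ : Matrix (Fin n) (Fin n) ℤ)
    (H H' : Fin n → Fin n → Fin n → Fin n → ℤ)
    (hsym12 : ∀ i j k l, H i j k l = H j i k l)
    (hH' : ∀ i' j' k' l', H' i' j' k' l' =
      ∑ i, ∑ j, ∑ k, ∑ l, Λ i i' * Λ j j' * Λ k k' * Λ l l' * H i j k l)
    (g : ℤ) (h1 : ∀ i j k, g ∣ H i i j k) (h2 : ∀ i j k l, g ∣ 2 * H i j k l) :
    (∀ i j k, g ∣ H' i i j k) ∧ (∀ i j k l, g ∣ 2 * H' i j k l) := by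
  constructor
  · intro a c d
    rw [hH' a a c d, d5aux_sum_pair_decomp n (fun i j =>
      ∑ k, ∑ l, Λ i a * Λ j a * Λ k c * Λ l d * H i j k l)]
    apply dvd_add
    · apply Finset.dvd_sum; intro i _
      apply Finset.dvd_sum; intro k _
      apply Finset.dvd_sum; intro l _
      exact (h1 i k l).mul_left _
    · apply Finset.dvd_sum; intro p _
      rw [← Finset.sum_add_distrib]
      apply Finset.dvd_sum; intro k _
      rw [← Finset.sum_add_distrib]
      apply Finset.dvd_sum; intro l _
      have : Λ p.1 a * Λ p.2 a * Λ k c * Λ l d * H p.1 p.2 k l +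
          Λ p.2 a * Λ p.1 a * Λ k c * Λ l d * H p.2 p.1 k l
          = (Λ p.1 a * Λ p.2 a * Λ k c * Λ l d) * (2 * H p.1 p.2 k l) := by
        rw [hsym12 p.2 p.1 k l]; ring
      rw [this]
      exact (h2 p.1 p.2 k l).mul_left _
  · intro i' j' k' l'
    rw [hH' i' j' k' l']
    simp only [Finset.mul_sum]
    apply Finset.dvd_sum; intro i _
    apply Finset.dvd_sum; intro j _
    apply Finset.dvd_sum; intro k _
    apply Finset.dvd_sum; intro l _
    have : (2 : ℤ) * (Λ i i' * Λ j j' * Λ k k' * Λ l l' * H i j k l)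
        = (Λ i i' * Λ j j' * Λ k k' * Λ l l') * (2 * H i j k l) := by ring
    rw [this]
    exact (h2 i j k l).mul_left _

private theorem d5aux_sym12_transformed (Λ : Matrix (Fin n) (Fin n) ℤ)
    (H H' : Fin n → Fin n → Fin n → Fin n → ℤ)
    (hsym12 : ∀ i j k l, H i j k l = H j i k l)
    (hH' : ∀ i' j' k' l', H' i' j' k' l' =
      ∑ i, ∑ j, ∑ k, ∑ l, Λ i i' * Λ j j' * Λ k k' * Λ l l' * H i j k l)
    (i' j' k' l' : Fin n) : H' i' j' k' l' = H' j' i' k' l' := by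
  rw [hH' i' j' k' l', hH' j' i' k' l']
  rw [Finset.sum_comm]
  apply Finset.sum_congr rfl; intro j _
  apply Finset.sum_congr rfl; intro i _
  apply Finset.sum_congr rfl; intro k _
  apply Finset.sum_congr rfl; intro l _
  rw [hsym12 i j k l]; ring

end AuxForD5

/-- The divisibility invariant `d₅(H) = gcd({H_{iijk}} ∪ {2H_{ijkl}})`. -/
noncomputable def d5 (n : ℕ) (H : Fin n → Fin n → Fin n → Fin n → ℤ) : ℤ :=
  ((Finset.univ.image fun p : Fin n × Fin n × Fin n => H p.1 p.1 p.2.1 p.2.2) ∪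
    (Finset.univ.image fun p : Fin n × Fin n × Fin n × Fin n =>
      2 * H p.1 p.2.1 p.2.2.1 p.2.2.2)).gcd id

private theorem d5aux_gen1 (n : ℕ) (K : Fin n → Fin n → Fin n → Fin n → ℤ)
    (i j k : Fin n) : d5 n K ∣ K i i j k := by
  have : K i i j k ∈ ((Finset.univ.image fun p : Fin n × Fin n × Fin n =>
      K p.1 p.1 p.2.1 p.2.2) ∪
    (Finset.univ.image fun p : Fin n × Fin n × Fin n × Fin n =>
      2 * K p.1 p.2.1 p.2.2.1 p.2.2.2)) :=
    Finset.mem_union_left _ (Finset.mem_image.mpr ⟨(i, j, k), Finset.mem_univ _, rfl⟩)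
  exact Finset.gcd_dvd this

private theorem d5aux_gen2 (n : ℕ) (K : Fin n → Fin n → Fin n → Fin n → ℤ)
    (i j k l : Fin n) : d5 n K ∣ 2 * K i j k l := by
  have : 2 * K i j k l ∈ ((Finset.univ.image fun p : Fin n × Fin n × Fin n =>
      K p.1 p.1 p.2.1 p.2.2) ∪
    (Finset.univ.image fun p : Fin n × Fin n × Fin n × Fin n =>
      2 * K p.1 p.2.1 p.2.2.1 p.2.2.2)) :=
    Finset.mem_union_right _ (Finset.mem_image.mpr ⟨(i, j, k, l), Finset.mem_univ _, rfl⟩)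
  exact Finset.gcd_dvd this

private theorem d5aux_dvd_d5 (n : ℕ) (K : Fin n → Fin n → Fin n → Fin n → ℤ) (g : ℤ)
    (h1 : ∀ i j k, g ∣ K i i j k) (h2 : ∀ i j k l, g ∣ 2 * K i j k l) :
    g ∣ d5 n K := by
  apply Finset.dvd_gcd
  intro b hb
  rcases Finset.mem_union.mp hb with h | h
  · obtain ⟨p, -, rfl⟩ := Finset.mem_image.mp h
    exact h1 p.1 p.2.1 p.2.2
  · obtain ⟨p, -, rfl⟩ := Finset.mem_image.mp h
    exact h2 p.1 p.2.1 p.2.2.1 p.2.2.2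

/-- Invariance of `d₅ = gcd(H_{iijk}, 2H_{ijkl})` under a unimodular integral
change of basis, for a totally symmetric rank-4 integer tensor H. -/
theorem d5_invariant_under_unimodular (n : ℕ) (hn : 1 ≤ n)
    (H : Fin n → Fin n → Fin n → Fin n → ℤ)
    (hsym : ∀ i j k l, H i j k l = H j i k l ∧ H i j k l = H i k j l ∧
      H i j k l = H i j l k)
    (Λ : Matrix (Fin n) (Fin n) ℤ) (hΛ : Λ.det = 1 ∨ Λ.det = -1)
    (H' : Fin n → Fin n → Fin n → Fin n → ℤ)
    (hH' : ∀ i' j' k' l', H' i' j' k' l' =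
      ∑ i, ∑ j, ∑ k, ∑ l, Λ i i' * Λ j j' * Λ k k' * Λ l l' * H i j k l) :
    d5 n H' = d5 n H := by
  classical
  set N : Matrix (Fin n) (Fin n) ℤ := Λ.det • Λ.adjugate with hNdef
  have hΛN : Λ * N = 1 := by
    rw [hNdef, Matrix.mul_smul, Matrix.mul_adjugate, smul_smul]
    rcases hΛ with h | h <;> rw [h] <;> norm_num
  have hsym12 : ∀ i j k l, H i j k l = H j i k l := fun i j k l => (hsym i j k l).1
  have hH : ∀ a b c d, H a b c d = ∑ i', ∑ j', ∑ k', ∑ l',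
      N i' a * N j' b * N k' c * N l' d * H' i' j' k' l' :=
    d5aux_inv_transform n Λ N hΛN H H' hH'
  have hsym12' : ∀ i j k l, H' i j k l = H' j i k l := fun i j k l =>
    d5aux_sym12_transformed n Λ H H' hsym12 hH' i j k l
  have fwd : d5 n H ∣ d5 n H' := by
    obtain ⟨k1, k2⟩ := d5aux_dvd_transformed n Λ H H' hsym12 hH' (d5 n H)
      (d5aux_gen1 n H) (d5aux_gen2 n H)
    exact d5aux_dvd_d5 n H' (d5 n H) k1 k2
  have bwd : d5 n H' ∣ d5 n H := by
    obtain ⟨k1, k2⟩ := d5aux_dvd_transformed n N H' H hsym12' hH (d5 n H')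
      (d5aux_gen1 n H') (d5aux_gen2 n H')
    exact d5aux_dvd_d5 n H (d5 n H') k1 k2
  exact dvd_antisymm_of_normalize_eq Finset.normalize_gcd Finset.normalize_gcd bwd fwd
end

section
/- Let n ≥ 1, let f be a multivariate polynomial in MvPolynomial (Fin n) ℤ, and let Λ be a unimodular n×n integer matrix (an integer matrix with determinant 1 or −1). Let f' denote the polynomial obtained from f by the linear substitution X_i ↦ ∑_j Λ_{i j}·X_j. Then the content of f' (the greatest common divisor of the coefficients of f') equals the content of f. -/
open MvPolynomial

lemma gcd_dvd_gcd_aeval (n : ℕ) (f : MvPolynomial (Fin n) ℤ)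
    (φ : Fin n → MvPolynomial (Fin n) ℤ) :
    f.support.gcd f.coeff ∣ (aeval φ f).support.gcd (aeval φ f).coeff := by
  set d := f.support.gcd f.coeff with hd
  have hC : C d ∣ f := (C_dvd_iff_dvd_coeff d f).2 fun m => by
    by_cases h : m ∈ f.support
    · exact Finset.gcd_dvd h
    · simp [notMem_support_iff.mp h]
  have hC' : C d ∣ aeval φ f := by
    obtain ⟨g, hg⟩ := hC
    refine ⟨aeval φ g, ?_⟩
    rw [hg, map_mul, aeval_C]
    rfl
  exact Finset.dvd_gcd fun m _ => (C_dvd_iff_dvd_coeff d _).1 hC' m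

/-- The content (gcd of the coefficients) of an integer multivariate polynomial
is invariant under a unimodular integral linear substitution of variables. -/
theorem content_invariant_under_unimodular
    (n : ℕ) (hn : 1 ≤ n) (f : MvPolynomial (Fin n) ℤ)
    (Λ : Matrix (Fin n) (Fin n) ℤ) (hΛ : Λ.det = 1 ∨ Λ.det = -1)
    (f' : MvPolynomial (Fin n) ℤ)
    (hf' : f' = aeval (fun i => ∑ j, C (Λ i j) * X j) f) :
    f'.support.gcd f'.coeff = f.support.gcd f.coeff := by
  have hu : IsUnit Λ.det := by rcases hΛ with h | h <;> simp [h]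
  have hmul : Λ * Λ⁻¹ = 1 := Matrix.mul_nonsing_inv Λ hu
  have hback : aeval (fun i => ∑ j, C (Λ⁻¹ i j) * X j) f' = f := by
    rw [hf', ← AlgHom.comp_apply, comp_aeval]
    have : (fun i => aeval (fun i => ∑ j, C (Λ⁻¹ i j) * X j)
        (∑ j, C (Λ i j) * X j)) = (X : Fin n → MvPolynomial (Fin n) ℤ) := by
      funext i
      rw [map_sum]
      simp only [map_mul, aeval_C, aeval_X]
      calc ∑ j, (algebraMap ℤ (MvPolynomial (Fin n) ℤ)) (Λ i j) *
              ∑ k, C (Λ⁻¹ j k) * X k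
          = ∑ k, C ((Λ * Λ⁻¹) i k) * X k := by
            simp only [Finset.mul_sum, algebraMap_eq]
            rw [Finset.sum_comm]
            refine Finset.sum_congr rfl fun k _ => ?_
            rw [Matrix.mul_apply, map_sum, Finset.sum_mul]
            refine Finset.sum_congr rfl fun j _ => ?_
            rw [← mul_assoc, ← C_mul]
        _ = X i := by
            rw [hmul]
            simp [Matrix.one_apply, apply_ite C, ite_mul]
    rw [this]
    simp [aeval_X_left]
  have h1 : f.support.gcd f.coeff ∣ f'.support.gcd f'.coeff := by
    rw [hf']; exact gcd_dvd_gcd_aeval n f _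
  have h2 : f'.support.gcd f'.coeff ∣ f.support.gcd f.coeff := by
    conv_rhs => rw [← hback]
    exact gcd_dvd_gcd_aeval n f' _
  have nonneg : ∀ g : MvPolynomial (Fin n) ℤ, 0 ≤ g.support.gcd g.coeff := by
    intro g
    rw [← Finset.normalize_gcd, ← Int.abs_eq_normalize]
    exact abs_nonneg _
  exact Int.dvd_antisymm (nonneg f') (nonneg f) h2 h1
end

section
/- Let n ≥ 1, let f be a multivariate polynomial in MvPolynomial (Fin n) ℤ, and let Λ be a unimodular n×n integer matrix (an integer matrix with determinant 1 or −1). Let g denote the polynomial obtained from f by the linear substitution X_i ↦ ∑_j Λ_{i j}·X_j, and for a polynomial h let Hess(h) denote the determinant of the n×n matrix of polynomials with (i,j)-entry pderiv i (pderiv j h). Then the content of Hess(g) (the gcd of its coefficients) equals the content of Hess(f). -/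
open MvPolynomial

lemma chain_rule {n : ℕ} (Λ : Matrix (Fin n) (Fin n) ℤ) (p : MvPolynomial (Fin n) ℤ) (j : Fin n) :
    pderiv j (aeval (fun i => ∑ k, C (Λ i k) * X k) p) =
      ∑ i, C (Λ i j) * aeval (fun i => ∑ k, C (Λ i k) * X k) (pderiv i p) := by
  set σ : Fin n → MvPolynomial (Fin n) ℤ := fun i => ∑ k, C (Λ i k) * X k with hσ
  induction p using MvPolynomial.induction_on with
  | C a => simp
  | add p q hp hq =>
      rw [map_add, map_add, hp, hq, ← Finset.sum_add_distrib]
      exact Finset.sum_congr rfl fun i _ => by simp only [map_add, mul_add]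
  | mul_X p k hp =>
      have hσk : pderiv j (σ k) = C (Λ k j) := by
        simp only [hσ, map_sum, pderiv_mul, pderiv_C, zero_mul, zero_add, pderiv_X]
        rw [Finset.sum_eq_single j] <;> simp +contextual [Pi.single_apply, eq_comm]
      have hsingle : ∑ i, C (Λ i j) * aeval σ (p * pderiv i (X k)) = aeval σ p * C (Λ k j) := by
        rw [Finset.sum_eq_single k]
        · simp [pderiv_X, mul_comm]
        · intro b _ hb; simp [pderiv_X, Pi.single_apply, hb, Ne.symm hb]
        · simp
      calc pderiv j (aeval σ (p * X k))
          = (∑ i, C (Λ i j) * aeval σ (pderiv i p)) * σ k + aeval σ p * C (Λ k j) := by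
            rw [map_mul, aeval_X, pderiv_mul, hp, hσk]
        _ = ∑ i, (C (Λ i j) * aeval σ (pderiv i p) * σ k
              + C (Λ i j) * aeval σ (p * pderiv i (X k))) := by
            rw [Finset.sum_add_distrib, Finset.sum_mul, hsingle]
        _ = ∑ i, C (Λ i j) * aeval σ (pderiv i (p * X k)) := by
            refine Finset.sum_congr rfl fun i _ => ?_
            rw [pderiv_mul]; simp only [map_add, map_mul, aeval_X]; ring

lemma content_dvd_aeval {n : ℕ} (σ : Fin n → MvPolynomial (Fin n) ℤ)
    (h : MvPolynomial (Fin n) ℤ) :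
    h.support.gcd h.coeff ∣ (aeval σ h).support.gcd (aeval σ h).coeff := by
  set d := h.support.gcd h.coeff with hd
  have h1 : C d ∣ h := (C_dvd_iff_dvd_coeff _ _).2 fun m => by
    by_cases hm : m ∈ h.support
    · exact Finset.gcd_dvd hm
    · simp [MvPolynomial.notMem_support_iff.1 hm]
  have h2 : C d ∣ aeval σ h := by
    obtain ⟨q, hq⟩ := h1
    exact ⟨aeval σ q, by rw [hq, map_mul, aeval_C, MvPolynomial.algebraMap_eq]⟩
  exact Finset.dvd_gcd fun m _ => (C_dvd_iff_dvd_coeff _ _).1 h2 m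

/-- The content of the Hessian determinant of an integer multivariate polynomial
is invariant under a unimodular integral linear substitution of variables. -/
theorem hessian_content_invariant_under_unimodular
    (n : ℕ) (hn : 1 ≤ n) (f : MvPolynomial (Fin n) ℤ)
    (Λ : Matrix (Fin n) (Fin n) ℤ) (hΛ : Λ.det = 1 ∨ Λ.det = -1)
    (g : MvPolynomial (Fin n) ℤ)
    (hg : g = aeval (fun i => ∑ j, C (Λ i j) * X j) f)
    (Hf Hg : MvPolynomial (Fin n) ℤ)
    (hHf : Hf = (Matrix.of (fun i j => pderiv i (pderiv j f))).det)
    (hHg : Hg = (Matrix.of (fun i j => pderiv i (pderiv j g))).det) :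
    Hg.support.gcd Hg.coeff = Hf.support.gcd Hf.coeff := by
  set σ : Fin n → MvPolynomial (Fin n) ℤ := fun i => ∑ k, C (Λ i k) * X k with hσ
  -- Hessian matrix of g equals Λᵀ (aeval σ Hessf) Λ
  set A : Matrix (Fin n) (Fin n) (MvPolynomial (Fin n) ℤ) :=
    Matrix.of (fun k l => aeval σ (pderiv k (pderiv l f))) with hA
  have hmat : Matrix.of (fun i j => pderiv i (pderiv j g)) = (Λ.map C).transpose * A * (Λ.map C) := by
    ext i j : 2
    have h1 : pderiv i (pderiv j g) =
        ∑ k, C (Λ k j) * ∑ l, C (Λ l i) * aeval σ (pderiv l (pderiv k f)) := by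
      rw [hg, chain_rule, map_sum]
      exact Finset.sum_congr rfl fun k _ => by
        rw [pderiv_C_mul]
        rw [chain_rule]
    rw [Matrix.of_apply, h1]
    simp only [Matrix.mul_apply, Matrix.transpose_apply, Matrix.map_apply, hA, Matrix.of_apply]
    congr 1
    refine Finset.sum_congr rfl fun k _ => ?_
    simp only [Finset.mul_sum, Finset.sum_mul]
    refine Finset.sum_congr rfl fun l _ => ?_
    ring
  -- determinant
  have hdetmapC : (Λ.map C).det = C Λ.det := ((C : ℤ →+* MvPolynomial (Fin n) ℤ).map_det Λ).symm
  have hdetA : A.det = aeval σ Hf := by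
    rw [hHf]
    have := ((aeval σ : MvPolynomial (Fin n) ℤ →ₐ[ℤ] MvPolynomial (Fin n) ℤ) :
        MvPolynomial (Fin n) ℤ →+* MvPolynomial (Fin n) ℤ).map_det
        (Matrix.of (fun i j => pderiv i (pderiv j f)))
    rw [show ((aeval σ : MvPolynomial (Fin n) ℤ →ₐ[ℤ] _) :
        MvPolynomial (Fin n) ℤ →+* _) ((Matrix.of (fun i j => pderiv i (pderiv j f))).det)
        = aeval σ ((Matrix.of (fun i j => pderiv i (pderiv j f))).det) from rfl] at this
    rw [this]
    rfl
  have hunit : C Λ.det * C Λ.det = (1 : MvPolynomial (Fin n) ℤ) := by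
    rcases hΛ with h | h <;> rw [h] <;> simp
  have hHgf : Hg = aeval σ Hf := by
    rw [hHg, hmat, Matrix.det_mul, Matrix.det_mul, Matrix.det_transpose, hdetmapC, hdetA]
    rw [mul_comm, ← mul_assoc, hunit, one_mul]
  -- inverse substitution
  have hdu : IsUnit Λ.det := Int.isUnit_iff.2 hΛ
  set M := Λ⁻¹ with hMdef
  have hΛM : Λ * M = 1 := Matrix.mul_nonsing_inv Λ hdu
  set τ : Fin n → MvPolynomial (Fin n) ℤ := fun i => ∑ k, C (M i k) * X k with hτ
  have hback : aeval τ (aeval σ Hf) = Hf := by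
    rw [← AlgHom.comp_apply, MvPolynomial.comp_aeval]
    have hτσ : (fun i => aeval τ (σ i)) = X := by
      funext i
      have : aeval τ (σ i) = ∑ l, C ((Λ * M) i l) * X l := by
        simp only [hσ, map_sum, map_mul, aeval_C, aeval_X, hτ, MvPolynomial.algebraMap_eq]
        simp only [Finset.mul_sum]
        rw [Finset.sum_comm]
        refine Finset.sum_congr rfl fun l _ => ?_
        rw [Matrix.mul_apply, map_sum, Finset.sum_mul]
        refine Finset.sum_congr rfl fun k _ => ?_
        rw [map_mul]; ring
      rw [this, hΛM]
      rw [Finset.sum_eq_single i]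
      · simp
      · intro b _ hb; simp [Matrix.one_apply, Ne.symm hb]
      · simp
    rw [hτσ]
    simp
  -- content equality
  have d1 : Hf.support.gcd Hf.coeff ∣ Hg.support.gcd Hg.coeff := by
    rw [hHgf]; exact content_dvd_aeval σ Hf
  have d2 : Hg.support.gcd Hg.coeff ∣ Hf.support.gcd Hf.coeff := by
    have := content_dvd_aeval τ Hg
    rw [hHgf, hback] at this
    rw [hHgf]; exact this
  exact dvd_antisymm_of_normalize_eq (Finset.normalize_gcd) (Finset.normalize_gcd) d2 d1
end
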